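/- arXiv:1109.4936 — 5 statements merged into one kernel-verified Lean document; each statement's English description precedes it below -/
import Mathlib

section
/- The Abel transform of f(t) = cos t, namely h(t) = ∫_0^t cos(s)/√(t-s) ds, satisfies h(t) = √(2π)·(C(√(2/π)·√t)·cos t + S(√(2/π)·√t)·sin t) for all t ≥ 0, where C and S are the Fresnel integrals. -/
open Real MeasureTheory intervalIntegral

/-- The Fresnel cosine integral `C(z) = ∫_0^z cos(π s²/2) ds`. -/
noncomputable def fresnelC (z : ℝ) : ℝ := ∫ s in (0:ℝ)..z, Real.cos (π * s ^ 2 / 2)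

/-- The Fresnel sine integral `S(z) = ∫_0^z sin(π s²/2) ds`. -/
noncomputable def fresnelS (z : ℝ) : ℝ := ∫ s in (0:ℝ)..z, Real.sin (π * s ^ 2 / 2)

open Set Interval in
section
open Set Interval

lemma abel_bound (t x : ℝ) (hx : x ≤ t) :
    |Real.cos x / Real.sqrt (t - x)| ≤ (t - x) ^ (-(1/2) : ℝ) := by
  rcases eq_or_lt_of_le hx with h | h
  · simp [h, Real.zero_rpow (by norm_num : (-(1/2):ℝ) ≠ 0)]
  · have h0 : 0 < t - x := by linarith
    have hs : 0 < Real.sqrt (t - x) := Real.sqrt_pos.2 h0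
    rw [Real.rpow_neg h0.le, ← Real.sqrt_eq_rpow, abs_div, abs_of_nonneg hs.le,
      inv_eq_one_div]
    gcongr
    exact Real.abs_cos_le_one x

lemma abel_g_integrable (t a b : ℝ) :
    IntervalIntegrable (fun s => (t - s) ^ (-(1/2) : ℝ)) volume a b := by
  have h := (intervalIntegrable_rpow' (a := t - a) (b := t - b)
    (r := -(1/2 : ℝ)) (by norm_num)).comp_sub_left t
  simpa using h

lemma abel_f_integrable (t a b : ℝ) (ha : a ≤ t) (hb : b ≤ t) :
    IntervalIntegrable (fun s => Real.cos s / Real.sqrt (t - s)) volume a b := by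
  apply (abel_g_integrable t a b).mono_fun'
  · apply Measurable.aestronglyMeasurable
    exact Real.measurable_cos.div ((measurable_const.sub measurable_id).sqrt)
  · filter_upwards [ae_restrict_mem measurableSet_uIoc] with x hx
    have hxt : x ≤ t := hx.2.trans (max_le ha hb)
    exact abel_bound t x hxt

lemma abel_key_sub (t ε : ℝ) (h0 : 0 < ε) (hε : ε < t) :
    ∫ s in (0:ℝ)..(t - ε), Real.cos s / Real.sqrt (t - s)
      = 2 * ∫ u in Real.sqrt ε..Real.sqrt t, Real.cos (t - u ^ 2) := by
  have ht : 0 < t := h0.trans hε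
  have hse : 0 < Real.sqrt ε := Real.sqrt_pos.2 h0
  have hst : Real.sqrt ε ≤ Real.sqrt t := Real.sqrt_le_sqrt hε.le
  have huIcc : [[Real.sqrt ε, Real.sqrt t]] = Icc (Real.sqrt ε) (Real.sqrt t) :=
    uIcc_of_le hst
  have himg : (fun u => t - u ^ 2) '' [[Real.sqrt ε, Real.sqrt t]] ⊆ Iic (t - ε) := by
    rintro _ ⟨u, hu, rfl⟩
    rw [huIcc] at hu
    have : ε ≤ u ^ 2 := by
      have := Real.sq_sqrt h0.le
      nlinarith [hu.1, hse]
    simp only [mem_Iic]; linarith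
  have hgcont : ContinuousOn (fun s => Real.cos s / Real.sqrt (t - s)) (Iic (t - ε)) := by
    apply ContinuousOn.div
    · exact Real.continuous_cos.continuousOn
    · exact (Real.continuous_sqrt.comp (continuous_const.sub continuous_id)).continuousOn
    · intro s hs
      have : 0 < t - s := by simp only [mem_Iic] at hs; linarith
      exact (Real.sqrt_pos.2 this).ne'
  have key := integral_comp_smul_deriv'' (f := fun u => t - u ^ 2)
      (f' := fun u => -(2 * u))
      (g := fun s => Real.cos s / Real.sqrt (t - s))
      (a := Real.sqrt ε) (b := Real.sqrt t)
      (by fun_prop)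
      (fun x _ => by
        have : HasDerivAt (fun u : ℝ => t - u ^ 2) (-(2 * x)) x := by
          simpa using ((hasDerivAt_pow 2 x).const_sub t)
        exact this.hasDerivWithinAt)
      (by fun_prop)
      (hgcont.mono himg)
  have hfa : t - Real.sqrt ε ^ 2 = t - ε := by rw [Real.sq_sqrt h0.le]
  have hfb : t - Real.sqrt t ^ 2 = 0 := by rw [Real.sq_sqrt ht.le]; ring
  simp only [] at key
  rw [hfa, hfb] at key
  have hcongr : ∫ x in Real.sqrt ε..Real.sqrt t,
      (-(2 * x)) • ((fun s => Real.cos s / Real.sqrt (t - s)) ∘ fun u => t - u ^ 2) x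
      = ∫ x in Real.sqrt ε..Real.sqrt t, -(2 * Real.cos (t - x ^ 2)) := by
    apply integral_congr
    intro x hx
    rw [huIcc] at hx
    have hx0 : 0 < x := lt_of_lt_of_le hse hx.1
    have : Real.sqrt (t - (t - x ^ 2)) = x := by
      rw [show t - (t - x ^ 2) = x ^ 2 by ring, Real.sqrt_sq hx0.le]
    simp only [Function.comp, this, smul_eq_mul]
    field_simp
  rw [hcongr] at key
  rw [intervalIntegral.integral_neg, intervalIntegral.integral_const_mul] at key
  rw [intervalIntegral.integral_symm (a := 0) (b := (t - ε))] at key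
  linarith [key]

lemma abel_tail_bound (t ε : ℝ) (h0 : 0 < ε) (hε : ε ≤ t) :
    |∫ s in (t - ε)..t, Real.cos s / Real.sqrt (t - s)| ≤ 2 * Real.sqrt ε := by
  have hab : t - ε ≤ t := by linarith
  have h1 := intervalIntegral.abs_integral_le_integral_abs (μ := volume)
    (f := fun s => Real.cos s / Real.sqrt (t - s)) hab
  have h2 : (∫ s in (t - ε)..t, |Real.cos s / Real.sqrt (t - s)|)
      ≤ ∫ s in (t - ε)..t, (t - s) ^ (-(1/2) : ℝ) := by
    apply intervalIntegral.integral_mono_on hab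
      ((abel_f_integrable t (t - ε) t hab le_rfl).abs)
      (abel_g_integrable t (t - ε) t)
    intro x hx
    exact abel_bound t x hx.2
  have h3 : (∫ s in (t - ε)..t, (t - s) ^ (-(1/2) : ℝ)) = 2 * Real.sqrt ε := by
    rw [intervalIntegral.integral_comp_sub_left (fun x => x ^ (-(1/2) : ℝ)) t]
    rw [sub_self]
    rw [integral_rpow (Or.inl (by norm_num))]
    rw [show (-(1/2) : ℝ) + 1 = 1/2 by norm_num]
    rw [show t - (t - ε) = ε by ring]
    rw [Real.zero_rpow (by norm_num), ← Real.sqrt_eq_rpow]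
    ring
  linarith

lemma abel_scale (f : ℝ → ℝ) (b : ℝ) :
    (∫ u in (0:ℝ)..(Real.sqrt (π / 2) * b), f (u ^ 2))
      = Real.sqrt (π / 2) * ∫ s in (0:ℝ)..b, f (π * s ^ 2 / 2) := by
  have hc : (0:ℝ) < π / 2 := by positivity
  have h := intervalIntegral.smul_integral_comp_mul_left
    (fun u => f (u ^ 2)) (c := Real.sqrt (π / 2)) (a := 0) (b := b)
  simp only [mul_zero, smul_eq_mul] at h
  rw [← h]
  congr 1
  apply integral_congr
  intro x _
  simp only [mul_pow, Real.sq_sqrt hc.le]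
  ring_nf

/-- the Abel transform of `cos` is expressible via Fresnel integrals. -/
theorem abel_cos_eq_fresnel (t : ℝ) (ht : 0 ≤ t) :
    (∫ s in (0:ℝ)..t, Real.cos s / Real.sqrt (t - s))
      = Real.sqrt (2 * π) *
        (fresnelC (Real.sqrt (2 / π) * Real.sqrt t) * Real.cos t
          + fresnelS (Real.sqrt (2 / π) * Real.sqrt t) * Real.sin t) := by
  rcases eq_or_lt_of_le ht with rfl | ht'
  · simp [fresnelC, fresnelS]
  have hπ : (0:ℝ) < π := Real.pi_pos
  have hb : Real.sqrt (π / 2) * (Real.sqrt (2 / π) * Real.sqrt t) = Real.sqrt t := by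
    rw [← mul_assoc, ← Real.sqrt_mul (by positivity)]
    rw [show π / 2 * (2 / π) = 1 by field_simp]
    simp
  have hC : (∫ u in (0:ℝ)..Real.sqrt t, Real.cos (u ^ 2))
      = Real.sqrt (π / 2) * fresnelC (Real.sqrt (2 / π) * Real.sqrt t) := by
    rw [fresnelC, ← abel_scale Real.cos, hb]
  have hS : (∫ u in (0:ℝ)..Real.sqrt t, Real.sin (u ^ 2))
      = Real.sqrt (π / 2) * fresnelS (Real.sqrt (2 / π) * Real.sqrt t) := by
    rw [fresnelS, ← abel_scale Real.sin, hb]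
  have hRHS : Real.sqrt (2 * π) *
        (fresnelC (Real.sqrt (2 / π) * Real.sqrt t) * Real.cos t
          + fresnelS (Real.sqrt (2 / π) * Real.sqrt t) * Real.sin t)
      = 2 * ∫ u in (0:ℝ)..Real.sqrt t, Real.cos (t - u ^ 2) := by
    have hint : (∫ u in (0:ℝ)..Real.sqrt t, Real.cos (t - u ^ 2))
        = Real.cos t * (∫ u in (0:ℝ)..Real.sqrt t, Real.cos (u ^ 2))
          + Real.sin t * (∫ u in (0:ℝ)..Real.sqrt t, Real.sin (u ^ 2)) := by
      have h1 : (∫ u in (0:ℝ)..Real.sqrt t, Real.cos (t - u ^ 2))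
          = ∫ u in (0:ℝ)..Real.sqrt t,
              (Real.cos t * Real.cos (u ^ 2) + Real.sin t * Real.sin (u ^ 2)) := by
        apply integral_congr
        intro x _
        simp [Real.cos_sub]
      rw [h1, intervalIntegral.integral_add
          ((Continuous.intervalIntegrable (by fun_prop) _ _))
          ((Continuous.intervalIntegrable (by fun_prop) _ _)),
        intervalIntegral.integral_const_mul, intervalIntegral.integral_const_mul]
    have h2 : Real.sqrt (2 * π) = 2 * Real.sqrt (π / 2) := by
      rw [show (2 * π : ℝ) = 2 ^ 2 * (π / 2) by ring, Real.sqrt_mul (by positivity),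
        Real.sqrt_sq (by norm_num)]
    rw [hint, hC, hS, h2]
    ring
  rw [hRHS]
  set A := (∫ s in (0:ℝ)..t, Real.cos s / Real.sqrt (t - s))
      - 2 * ∫ u in (0:ℝ)..Real.sqrt t, Real.cos (t - u ^ 2) with hA
  have hbound : ∀ ε, 0 < ε → ε < t → |A| ≤ 4 * Real.sqrt ε := by
    intro ε hε1 hε2
    have hsplit1 : (∫ s in (0:ℝ)..t, Real.cos s / Real.sqrt (t - s))
        = (∫ s in (0:ℝ)..(t - ε), Real.cos s / Real.sqrt (t - s))
          + ∫ s in (t - ε)..t, Real.cos s / Real.sqrt (t - s) :=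
      (intervalIntegral.integral_add_adjacent_intervals
        (abel_f_integrable t 0 (t - ε) ht (by linarith))
        (abel_f_integrable t (t - ε) t (by linarith) le_rfl)).symm
    have hsplit2 : (∫ u in (0:ℝ)..Real.sqrt t, Real.cos (t - u ^ 2))
        = (∫ u in (0:ℝ)..Real.sqrt ε, Real.cos (t - u ^ 2))
          + ∫ u in Real.sqrt ε..Real.sqrt t, Real.cos (t - u ^ 2) :=
      (intervalIntegral.integral_add_adjacent_intervals
        (Continuous.intervalIntegrable (by fun_prop) _ _)
        (Continuous.intervalIntegrable (by fun_prop) _ _)).symm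
    have hkey := abel_key_sub t ε hε1 hε2
    have hsmall : |∫ u in (0:ℝ)..Real.sqrt ε, Real.cos (t - u ^ 2)| ≤ Real.sqrt ε := by
      have h := intervalIntegral.norm_integral_le_of_norm_le_const (C := 1)
        (a := (0:ℝ)) (b := Real.sqrt ε) (f := fun u => Real.cos (t - u ^ 2))
        (fun x _ => by simpa using Real.abs_cos_le_one _)
      simpa [abs_of_nonneg (Real.sqrt_nonneg ε)] using h
    have htail := abel_tail_bound t ε hε1 hε2.le
    have hAe : A = (∫ s in (t - ε)..t, Real.cos s / Real.sqrt (t - s))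
        - 2 * ∫ u in (0:ℝ)..Real.sqrt ε, Real.cos (t - u ^ 2) := by
      rw [hA, hsplit1, hsplit2, hkey]; ring
    rw [hAe]
    calc |(∫ s in (t - ε)..t, Real.cos s / Real.sqrt (t - s))
        - 2 * ∫ u in (0:ℝ)..Real.sqrt ε, Real.cos (t - u ^ 2)|
        ≤ |∫ s in (t - ε)..t, Real.cos s / Real.sqrt (t - s)|
          + |2 * ∫ u in (0:ℝ)..Real.sqrt ε, Real.cos (t - u ^ 2)| := abs_sub _ _
      _ ≤ 2 * Real.sqrt ε + 2 * Real.sqrt ε := by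
          rw [abs_mul, abs_two]
          linarith
      _ = 4 * Real.sqrt ε := by ring
  have hA0 : A = 0 := by
    by_contra h
    have habs : 0 < |A| := abs_pos.2 h
    set ε := min (t / 2) ((|A| / 8) ^ 2) with hε
    have hε1 : 0 < ε := lt_min (by linarith) (by positivity)
    have hε2 : ε < t := lt_of_le_of_lt (min_le_left _ _) (by linarith)
    have h1 := hbound ε hε1 hε2
    have h2 : Real.sqrt ε ≤ |A| / 8 := by
      calc Real.sqrt ε ≤ Real.sqrt ((|A| / 8) ^ 2) := Real.sqrt_le_sqrt (min_le_right _ _)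
        _ = |A| / 8 := Real.sqrt_sq (by positivity)
    linarith
  have hfin : (∫ s in (0:ℝ)..t, Real.cos s / Real.sqrt (t - s))
      - 2 * ∫ u in (0:ℝ)..Real.sqrt t, Real.cos (t - u ^ 2) = 0 := hA0
  linarith [hfin]

end
end

section
/- Let h(t) = ∫_0^t cos(s)/√(t-s) ds and H_s(t) = ∫_0^t h(s) sin(s) ds. Then H_s(t) = (1/4)·{2√t cos t − √(2π)·( C(√(2/π)√t) cos 2t + S(√(2/π)√t)·(sin 2t − 2t) )} for all t ≥ 0. -/
/-!
The substitution `s = t - u²` turns `h(t)` into `2 ∫_0^√t cos (t - u²) du`; the addition formula and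
the scaling `u = √(π/2) v` then give `h(t) = √(2π) (C cos t + S sin t)`, with `C` and `S` taken at
`√(2t/π)`. The claimed closed form vanishes at `0` and, by the chain rule and
`cos t cos 2t + sin t sin 2t = cos t`, has derivative `h(t) sin t` for `t > 0`.
-/

open Real MeasureTheory intervalIntegral

/-- The Abel transform of `cos`: `h(t) = ∫_0^t cos s/√(t-s) ds`. -/
noncomputable def abelCos (t : ℝ) : ℝ := ∫ s in (0:ℝ)..t, Real.cos s / Real.sqrt (t - s)

lemma image_sub_sq_Ioo {t : ℝ} (ht : 0 ≤ t) :
    (fun u : ℝ => t - u ^ 2) '' Set.Ioo 0 (√t) = Set.Ioo 0 t := by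
  ext y
  simp only [Set.mem_image, Set.mem_Ioo]
  constructor
  · rintro ⟨u, ⟨hu0, hut⟩, rfl⟩
    have : u ^ 2 < t := by nlinarith [sq_sqrt ht]
    constructor <;> nlinarith
  · rintro ⟨hy0, hyt⟩
    refine ⟨√(t - y), ⟨sqrt_pos.2 (by linarith), sqrt_lt_sqrt (by linarith) (by linarith)⟩, ?_⟩
    rw [sq_sqrt (by linarith)]
    ring

theorem integral_div_sqrt_sub (f : ℝ → ℝ) {t : ℝ} (ht : 0 ≤ t) :
    ∫ s in (0:ℝ)..t, f s / √(t - s) = ∫ u in (0:ℝ)..√t, 2 * f (t - u ^ 2) := by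
  have hderiv : ∀ u ∈ Set.Ioo 0 √t,
      HasDerivWithinAt (fun u : ℝ => t - u ^ 2) (-(2 * u)) (Set.Ioo 0 √t) u := fun u _ => by
    simpa using ((hasDerivAt_pow 2 u).const_sub t).hasDerivWithinAt
  have hinj : Set.InjOn (fun u : ℝ => t - u ^ 2) (Set.Ioo 0 √t) := fun a ha b hb hab => by
    simp only [Set.mem_Ioo] at ha hb hab
    nlinarith
  rw [integral_of_le ht, integral_of_le (sqrt_nonneg t), integral_Ioc_eq_integral_Ioo,
    integral_Ioc_eq_integral_Ioo, ← image_sub_sq_Ioo ht,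
    integral_image_eq_integral_abs_deriv_smul measurableSet_Ioo hderiv hinj]
  refine setIntegral_congr_fun measurableSet_Ioo fun u ⟨hu, _⟩ => ?_
  rw [sub_sub_cancel, sqrt_sq hu.le, abs_neg, abs_of_pos (by positivity), smul_eq_mul]
  field_simp

lemma integral_comp_pi_mul_sq_div_two (g : ℝ → ℝ) (x : ℝ) :
    ∫ s in (0:ℝ)..√(2 / π) * x, g (π * s ^ 2 / 2) = √(2 / π) * ∫ u in (0:ℝ)..x, g (u ^ 2) := by
  have hsq : ∀ u : ℝ, π * (√(2 / π) * u) ^ 2 / 2 = u ^ 2 := fun u => by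
    rw [mul_pow, sq_sqrt (by positivity)]
    field_simp
  have := smul_integral_comp_mul_left (fun s => g (π * s ^ 2 / 2)) √(2 / π) (a := 0) (b := x)
  simp only [hsq, mul_zero, smul_eq_mul] at this
  exact this.symm

lemma hasDerivAt_integral_comp_pi_mul_sq_div_two {g : ℝ → ℝ} (hg : Continuous g) {y : ℝ}
    (hy : 0 < y) :
    HasDerivAt (fun y => ∫ s in (0:ℝ)..√(2 / π) * √y, g (π * s ^ 2 / 2))
      (g y * (√(2 / π) / (2 * √y))) y := by
  have hinner : HasDerivAt (fun y => √(2 / π) * √y) (√(2 / π) / (2 * √y)) y :=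
    ((hasDerivAt_sqrt hy.ne').const_mul _).congr_deriv (by ring)
  have harg : π * (√(2 / π) * √y) ^ 2 / 2 = y := by
    rw [mul_pow, sq_sqrt (by positivity), sq_sqrt hy.le]
    field_simp
  have houter := ((by fun_prop : Continuous fun s => g (π * s ^ 2 / 2)).integral_hasStrictDerivAt
    0 (√(2 / π) * √y)).hasDerivAt
  rw [harg] at houter
  exact houter.comp y hinner

@[fun_prop]
lemma continuous_fresnelC : Continuous fresnelC :=
  continuous_primitive (fun _ _ => by apply Continuous.intervalIntegrable; fun_prop) 0

@[fun_prop]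
lemma continuous_fresnelS : Continuous fresnelS :=
  continuous_primitive (fun _ _ => by apply Continuous.intervalIntegrable; fun_prop) 0

lemma sqrt_two_mul_pi_mul_sqrt_two_div_pi : √(2 * π) * √(2 / π) = 2 := by
  rw [← sqrt_mul (by positivity), show 2 * π * (2 / π) = 2 ^ 2 by field_simp,
    sqrt_sq zero_le_two]

theorem abelCos_eq {t : ℝ} (ht : 0 ≤ t) :
    abelCos t = √(2 * π) * (fresnelC (√(2 / π) * √t) * cos t
      + fresnelS (√(2 / π) * √t) * sin t) := by
  have hcos : IntervalIntegrable (fun u : ℝ => cos (u ^ 2)) volume 0 √t := by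
    apply Continuous.intervalIntegrable; fun_prop
  have hsin : IntervalIntegrable (fun u : ℝ => sin (u ^ 2)) volume 0 √t := by
    apply Continuous.intervalIntegrable; fun_prop
  have hsplit : ∫ u in (0:ℝ)..√t, 2 * cos (t - u ^ 2)
      = 2 * cos t * (∫ u in (0:ℝ)..√t, cos (u ^ 2))
        + 2 * sin t * ∫ u in (0:ℝ)..√t, sin (u ^ 2) := by
    rw [← intervalIntegral.integral_const_mul, ← intervalIntegral.integral_const_mul,
      ← integral_add (hcos.const_mul _) (hsin.const_mul _)]
    congr 1 with u
    rw [cos_sub]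
    ring
  rw [abelCos, integral_div_sqrt_sub _ ht, hsplit, fresnelC, fresnelS,
    integral_comp_pi_mul_sq_div_two cos, integral_comp_pi_mul_sq_div_two sin]
  linear_combination -(cos t * (∫ u in (0:ℝ)..√t, cos (u ^ 2))
    + sin t * ∫ u in (0:ℝ)..√t, sin (u ^ 2)) * sqrt_two_mul_pi_mul_sqrt_two_div_pi

lemma continuousOn_abelCos : ContinuousOn abelCos (Set.Ici 0) :=
  ContinuousOn.congr (by fun_prop) fun _ hs => abelCos_eq hs

noncomputable def hsClosedForm (t : ℝ) : ℝ :=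
  (1/4) * (2 * √t * cos t - √(2 * π) * (fresnelC (√(2 / π) * √t) * cos (2 * t)
    + fresnelS (√(2 / π) * √t) * (sin (2 * t) - 2 * t)))

lemma continuous_hsClosedForm : Continuous hsClosedForm := by
  unfold hsClosedForm
  fun_prop

lemma hsClosedForm_zero : hsClosedForm 0 = 0 := by
  simp [hsClosedForm, fresnelC, fresnelS]

lemma hasDerivAt_hsClosedForm {x : ℝ} (hx : 0 < x) :
    HasDerivAt hsClosedForm (abelCos x * sin x) x := by
  have hC : HasDerivAt (fun y => fresnelC (√(2 / π) * √y)) (cos x * (√(2 / π) / (2 * √x))) x :=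
    hasDerivAt_integral_comp_pi_mul_sq_div_two continuous_cos hx
  have hS : HasDerivAt (fun y => fresnelS (√(2 / π) * √y)) (sin x * (√(2 / π) / (2 * √x))) x :=
    hasDerivAt_integral_comp_pi_mul_sq_div_two continuous_sin hx
  have h2x : HasDerivAt (fun y : ℝ => 2 * y) 2 x := by simpa using (hasDerivAt_id x).const_mul 2
  have hF := ((((hasDerivAt_sqrt hx.ne').const_mul 2).mul (hasDerivAt_cos x)).sub
    (((hC.mul ((hasDerivAt_cos _).comp x h2x)).add
      (hS.mul (((hasDerivAt_sin _).comp x h2x).sub h2x))).const_mul √(2 * π))).const_mul (1 / 4)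
  refine hF.congr_deriv ?_
  have hs : √x ≠ 0 := (sqrt_pos.2 hx).ne'
  have hsx : √x ^ 2 = x := sq_sqrt hx.le
  have hPc := sqrt_two_mul_pi_mul_sqrt_two_div_pi
  simp only [Function.comp_apply, Pi.sub_apply]
  rw [abelCos_eq hx.le, cos_two_mul, sin_two_mul]
  field_simp
  linear_combination -(cos x * (2 * cos x ^ 2 - 1) + sin x * (2 * sin x * cos x - 2 * x)) * hPc
    - 4 * sin x * hsx
    - (4 * cos x + 8 * √x * √(2 * π) * fresnelS (√x * √(2 / π))) * sin_sq_add_cos_sq x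

/-- closed form for `H_s(t) = ∫_0^t h(s) sin s ds`. -/
theorem Hs_closed_form (t : ℝ) (ht : 0 ≤ t) :
    (∫ s in (0:ℝ)..t, abelCos s * Real.sin s)
      = (1/4) * (2 * Real.sqrt t * Real.cos t
          - Real.sqrt (2 * π) *
            (fresnelC (Real.sqrt (2 / π) * Real.sqrt t) * Real.cos (2 * t)
              + fresnelS (Real.sqrt (2 / π) * Real.sqrt t) * (Real.sin (2 * t) - 2 * t))) := by
  have hint : IntervalIntegrable (fun s => abelCos s * sin s) volume 0 t :=
    ((continuousOn_abelCos.mono Set.Icc_subset_Ici_self).mul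
      continuous_sin.continuousOn).intervalIntegrable_of_Icc ht
  rw [integral_eq_sub_of_hasDeriv_right_of_le ht continuous_hsClosedForm.continuousOn
    (fun x hx => (hasDerivAt_hsClosedForm hx.1).hasDerivWithinAt) hint,
    hsClosedForm_zero, sub_zero, hsClosedForm]
end

section
/- Let g be a smooth function on [0,∞) with g(0)=0, and define the Abel transform h(t) = ∫_0^t g'(s)/√(t-s) ds. If there exist t_p > 0, ν > 0, M > 0 such that |g'(t+t_p) − g'(t)| ≤ M·t^{−(1/2+ν)} for all t ≥ 1, then h(t+t_p) − h(t) = O(t^{−ν}) if 0 < ν < 1/2, O(t^{−1/2} log t) if ν = 1/2, and O(t^{−1/2}) if ν > 1/2, as t → ∞. -/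
open Real MeasureTheory intervalIntegral Filter Asymptotics

open Set

lemma aux_inv_sqrt (x : ℝ) (hx : 0 ≤ x) : (Real.sqrt x)⁻¹ = x ^ (-(1:ℝ)/2) := by
  rw [Real.sqrt_eq_rpow, ← Real.rpow_neg hx]
  norm_num

lemma aux_rpow_int (t a b : ℝ) :
    IntervalIntegrable (fun s => (t - s) ^ (-(1:ℝ)/2)) volume a b := by
  have := (intervalIntegral.intervalIntegrable_rpow' (a := t - a) (b := t - b)
    (r := -(1:ℝ)/2) (by norm_num)).comp_sub_left t
  simpa using this

lemma aux_rpow_integral (t a b : ℝ) (hab : a ≤ b) (hbt : b ≤ t) :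
    ∫ s in a..b, (t - s) ^ (-(1:ℝ)/2) = 2 * (Real.sqrt (t - a) - Real.sqrt (t - b)) := by
  rw [show (fun s => (t - s) ^ (-(1:ℝ)/2)) = fun s => (fun u => u ^ (-(1:ℝ)/2)) (t - s) from rfl,
    intervalIntegral.integral_comp_sub_left (fun u => u ^ (-(1:ℝ)/2)) t,
    integral_rpow (Or.inl (by norm_num)), Real.sqrt_eq_rpow, Real.sqrt_eq_rpow]
  norm_num
  ring

lemma aux_div_int (f : ℝ → ℝ) (hf : Continuous f) (t a b : ℝ) (hab : a ≤ b) (hbt : b ≤ t) :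
    IntervalIntegrable (fun s => f s / Real.sqrt (t - s)) volume a b := by
  obtain ⟨K, hK⟩ := (isCompact_Icc (a := a) (b := b)).exists_bound_of_continuousOn
    hf.continuousOn
  refine IntervalIntegrable.mono_fun ((aux_rpow_int t a b).const_mul K) ?_ ?_
  · exact ((hf.measurable.div ((measurable_const.sub measurable_id).sqrt)).aestronglyMeasurable)
  · rw [Filter.EventuallyLE, ae_restrict_iff' measurableSet_uIoc]
    refine Eventually.of_forall fun s hs => ?_
    rw [uIoc_of_le hab] at hs
    have hs' : s ∈ Set.Icc a b := ⟨hs.1.le, hs.2⟩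
    have h0 : 0 ≤ t - s := by linarith [hs.2]
    have hK0 : 0 ≤ K := (norm_nonneg _).trans (hK s hs')
    simp only [Real.norm_eq_abs]
    rw [abs_div, abs_of_nonneg (Real.sqrt_nonneg _), div_eq_mul_inv, aux_inv_sqrt _ h0,
      abs_mul, abs_of_nonneg (Real.rpow_nonneg h0 _)]
    exact mul_le_mul_of_nonneg_right ((hK s hs').trans (le_abs_self K)) (Real.rpow_nonneg h0 _)

lemma aux_bound_far (f : ℝ → ℝ) (K t a b : ℝ) (hab : a ≤ b) (hbt : b < t) (hK0 : 0 ≤ K)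
    (hK : ∀ s ∈ Set.Ioc a b, |f s| ≤ K) :
    |∫ s in a..b, f s / Real.sqrt (t - s)| ≤ K / Real.sqrt (t - b) * (b - a) := by
  have := intervalIntegral.norm_integral_le_of_norm_le_const
    (a := a) (b := b) (C := K / Real.sqrt (t - b)) (f := fun s => f s / Real.sqrt (t - s)) ?_
  · rw [Real.norm_eq_abs] at this
    have hba : |b - a| = b - a := abs_of_nonneg (by linarith)
    rwa [hba] at this
  · intro x hx
    rw [uIoc_of_le hab] at hx
    have h0 : (0:ℝ) < t - b := by linarith
    have h0' : (0:ℝ) ≤ t - x := by linarith [hx.2]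
    rw [Real.norm_eq_abs, abs_div, abs_of_nonneg (Real.sqrt_nonneg _)]
    exact div_le_div₀ hK0 (hK x hx) (Real.sqrt_pos.2 h0) (Real.sqrt_le_sqrt (by linarith [hx.2]))

lemma aux_bound_near (f : ℝ → ℝ) (K t a b : ℝ) (hab : a ≤ b) (hbt : b ≤ t) (hK0 : 0 ≤ K)
    (hK : ∀ s ∈ Set.Ioc a b, |f s| ≤ K) :
    |∫ s in a..b, f s / Real.sqrt (t - s)| ≤ K * (2 * Real.sqrt (t - a)) := by
  have hb := intervalIntegral.norm_integral_le_abs_of_norm_le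
    (f := fun s => f s / Real.sqrt (t - s)) (g := fun s => K * (t - s) ^ (-(1:ℝ)/2))
    (μ := volume) (a := a) (b := b) ?_ ((aux_rpow_int t a b).const_mul K)
  · rw [Real.norm_eq_abs] at hb
    refine hb.trans ?_
    rw [intervalIntegral.integral_const_mul, aux_rpow_integral t a b hab hbt, abs_mul, abs_mul,
      abs_of_nonneg hK0]
    rw [abs_two]
    have h1 : Real.sqrt (t - b) ≤ Real.sqrt (t - a) := Real.sqrt_le_sqrt (by linarith)
    have h2 : |Real.sqrt (t - a) - Real.sqrt (t - b)| ≤ Real.sqrt (t - a) := by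
      rw [abs_of_nonneg (by linarith)]; linarith [Real.sqrt_nonneg (t - b)]
    exact mul_le_mul_of_nonneg_left (mul_le_mul_of_nonneg_left h2 (by norm_num)) hK0
  · rw [ae_restrict_iff' measurableSet_uIoc]
    refine Eventually.of_forall fun s hs => ?_
    rw [uIoc_of_le hab] at hs
    have h0 : 0 ≤ t - s := by linarith [hs.2]
    rw [Real.norm_eq_abs, abs_div, abs_of_nonneg (Real.sqrt_nonneg _), div_eq_mul_inv,
      aux_inv_sqrt _ h0]
    exact mul_le_mul_of_nonneg_right (hK s hs) (Real.rpow_nonneg h0 _)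

lemma aux_decomp (f : ℝ → ℝ) (hf : Continuous f) (tp : ℝ) (htp : 0 < tp) (t : ℝ) (ht : 0 ≤ t) :
    (∫ s in (0:ℝ)..(t+tp), f s / Real.sqrt (t + tp - s)) - ∫ s in (0:ℝ)..t, f s / Real.sqrt (t - s)
    = (∫ s in (-tp)..(0:ℝ), f (s + tp) / Real.sqrt (t - s))
      + ∫ s in (0:ℝ)..t, (f (s + tp) - f s) / Real.sqrt (t - s) := by
  have hft : Continuous fun s => f (s + tp) := hf.comp (continuous_add_right tp)
  have i1 : IntervalIntegrable (fun s => f (s + tp) / Real.sqrt (t - s)) volume (-tp) 0 :=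
    aux_div_int _ hft t _ _ (by linarith) ht
  have i2 : IntervalIntegrable (fun s => f (s + tp) / Real.sqrt (t - s)) volume 0 t :=
    aux_div_int _ hft t _ _ ht le_rfl
  have i3 : IntervalIntegrable (fun s => f s / Real.sqrt (t - s)) volume 0 t :=
    aux_div_int _ hf t _ _ ht le_rfl
  have h1 : (∫ s in (0:ℝ)..(t+tp), f s / Real.sqrt (t + tp - s))
      = ∫ s in (-tp)..t, f (s + tp) / Real.sqrt (t - s) := by
    have key := intervalIntegral.integral_comp_add_right (a := -tp) (b := t)
      (fun s => f s / Real.sqrt (t + tp - s)) tp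
    simp only [neg_add_cancel] at key
    rw [← key]
    apply intervalIntegral.integral_congr
    intro x _
    simp only
    congr 2
    ring
  have h2 : (∫ s in (-tp)..t, f (s + tp) / Real.sqrt (t - s))
      = (∫ s in (-tp)..(0:ℝ), f (s + tp) / Real.sqrt (t - s))
        + ∫ s in (0:ℝ)..t, f (s + tp) / Real.sqrt (t - s) :=
    (intervalIntegral.integral_add_adjacent_intervals i1 i2).symm
  have h3 : (∫ s in (0:ℝ)..t, (f (s + tp) - f s) / Real.sqrt (t - s))
      = (∫ s in (0:ℝ)..t, f (s + tp) / Real.sqrt (t - s))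
        - ∫ s in (0:ℝ)..t, f s / Real.sqrt (t - s) := by
    rw [← intervalIntegral.integral_sub i2 i3]
    simp_rw [sub_div]
  rw [h1, h2, h3]
  ring

lemma aux_B2 (φ : ℝ → ℝ) (M r t : ℝ) (hM : 0 ≤ M) (ht : 2 ≤ t)
    (hφ : ∀ s ∈ Set.Ioc (1:ℝ) (t/2), |φ s| ≤ M * s ^ r) :
    |∫ s in (1:ℝ)..(t/2), φ s / Real.sqrt (t - s)| ≤
      M * (∫ s in (1:ℝ)..(t/2), s ^ r) / Real.sqrt (t/2) := by
  have h1t : (1:ℝ) ≤ t/2 := by linarith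
  have h0u : (0:ℝ) ∉ Set.uIcc (1:ℝ) (t/2) := by
    rw [Set.uIcc_of_le h1t]
    intro hc
    exact absurd hc.1 (by norm_num)
  have hint : IntervalIntegrable (fun s : ℝ => s ^ r) volume 1 (t/2) :=
    intervalIntegral.intervalIntegrable_rpow (Or.inr h0u)
  have hgint : IntervalIntegrable (fun s : ℝ => M * s ^ r / Real.sqrt (t/2)) volume 1 (t/2) :=
    (hint.const_mul M).div_const _
  have hb := intervalIntegral.norm_integral_le_abs_of_norm_le
    (f := fun s => φ s / Real.sqrt (t - s)) (g := fun s : ℝ => M * s ^ r / Real.sqrt (t/2))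
    (μ := volume) (a := 1) (b := t/2) ?_ hgint
  · rw [Real.norm_eq_abs] at hb
    refine hb.trans ?_
    have heq : (∫ s in (1:ℝ)..(t/2), M * s ^ r / Real.sqrt (t/2))
        = M * (∫ s in (1:ℝ)..(t/2), s ^ r) / Real.sqrt (t/2) := by
      rw [intervalIntegral.integral_div, intervalIntegral.integral_const_mul]
    rw [heq, abs_of_nonneg]
    apply div_nonneg (mul_nonneg hM _) (Real.sqrt_nonneg _)
    apply intervalIntegral.integral_nonneg h1t
    intro u hu
    exact Real.rpow_nonneg (by linarith [hu.1]) _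
  · rw [ae_restrict_iff' measurableSet_uIoc]
    refine Filter.Eventually.of_forall fun s hs => ?_
    rw [Set.uIoc_of_le h1t] at hs
    have hs1 : (1:ℝ) < s := hs.1
    have hst : s ≤ t/2 := hs.2
    rw [Real.norm_eq_abs, abs_div, abs_of_nonneg (Real.sqrt_nonneg _)]
    exact div_le_div₀ (mul_nonneg hM (Real.rpow_nonneg (by linarith) _)) (hφ s hs)
      (Real.sqrt_pos.2 (by linarith)) (Real.sqrt_le_sqrt (by linarith))

lemma aux_half (t : ℝ) (ht : (0:ℝ) ≤ t) : Real.sqrt t / 2 = Real.sqrt (t/4) := by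
  rw [show t/4 = t * (1/4) by ring, Real.sqrt_mul ht,
    show Real.sqrt (1/4) = 1/2 by
      rw [show (1:ℝ)/4 = (1/2)^2 by norm_num, Real.sqrt_sq (by norm_num)]]
  ring

lemma aux_sqrt_quarter (t : ℝ) (ht : (3:ℝ) ≤ t) : Real.sqrt t / 2 ≤ Real.sqrt (t - 1) := by
  rw [aux_half t (by linarith)]
  exact Real.sqrt_le_sqrt (by linarith)

set_option maxHeartbeats 1000000 in
lemma aux_master (f : ℝ → ℝ) (hf : Continuous f) (tp ν M : ℝ) (htp : 0 < tp) (hν : 0 < ν)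
    (hM : 0 < M)
    (hdecay : ∀ s : ℝ, 1 ≤ s → |f (s + tp) - f s| ≤ M * s ^ (-(1/2 + ν))) :
    ∃ C : ℝ, 0 < C ∧ ∀ t : ℝ, 3 ≤ t →
      |(∫ s in (0:ℝ)..(t+tp), f s / Real.sqrt (t + tp - s))
          - ∫ s in (0:ℝ)..t, f s / Real.sqrt (t - s)|
        ≤ C * t ^ (-(1:ℝ)/2)
          + C * (t ^ (-(1:ℝ)/2) * ∫ s in (1:ℝ)..(t/2), s ^ (-(1/2 + ν)))
          + C * t ^ (-ν) := by
  have hft : Continuous fun s => f (s + tp) := hf.comp (continuous_add_right tp)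
  have hφc : Continuous fun s => f (s + tp) - f s := hft.sub hf
  obtain ⟨K0, hK0⟩ := (isCompact_Icc (a := -tp) (b := 0)).exists_bound_of_continuousOn
    (hft.continuousOn)
  obtain ⟨K1, hK1⟩ := (isCompact_Icc (a := (0:ℝ)) (b := 1)).exists_bound_of_continuousOn
    (hφc.continuousOn)
  have hK0n : 0 ≤ K0 := (norm_nonneg _).trans (hK0 0 ⟨by linarith, le_rfl⟩)
  have hK1n : 0 ≤ K1 := (norm_nonneg _).trans (hK1 0 ⟨le_rfl, by norm_num⟩)
  have h2ν : (0:ℝ) < 2 ^ ν := Real.rpow_pos_of_pos (by norm_num) ν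
  refine ⟨K0 * tp + 2 * K1 + 2 * M + 2 * M * 2 ^ ν, by positivity, fun t ht => ?_⟩
  set I : ℝ := ∫ s in (1:ℝ)..(t/2), s ^ (-(1/2 + ν)) with hI
  have ht0 : (0:ℝ) ≤ t := by linarith
  have h1t : (1:ℝ) ≤ t / 2 := by linarith
  -- decomposition
  rw [aux_decomp f hf tp htp t ht0]
  -- split the main integral
  have iφ : ∀ a b : ℝ, a ≤ b → b ≤ t →
      IntervalIntegrable (fun s => (f (s + tp) - f s) / Real.sqrt (t - s)) volume a b :=
    fun a b hab hbt => aux_div_int _ hφc t a b hab hbt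
  have hsplit : (∫ s in (0:ℝ)..t, (f (s + tp) - f s) / Real.sqrt (t - s))
      = (∫ s in (0:ℝ)..1, (f (s + tp) - f s) / Real.sqrt (t - s))
        + ((∫ s in (1:ℝ)..(t/2), (f (s + tp) - f s) / Real.sqrt (t - s))
        + ∫ s in (t/2)..t, (f (s + tp) - f s) / Real.sqrt (t - s)) := by
    rw [intervalIntegral.integral_add_adjacent_intervals
      (iφ 1 (t/2) h1t (by linarith)) (iφ (t/2) t (by linarith) le_rfl),
      intervalIntegral.integral_add_adjacent_intervals
      (iφ 0 1 (by norm_num) (by linarith)) (iφ 1 t (by linarith) le_rfl)]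
  rw [hsplit]
  -- bound A
  have hA : |∫ s in (-tp)..(0:ℝ), f (s + tp) / Real.sqrt (t - s)|
      ≤ K0 * tp * t ^ (-(1:ℝ)/2) := by
    have := aux_bound_far (fun s => f (s + tp)) K0 t (-tp) 0 (by linarith) (by linarith) hK0n
      (fun s hs => by
        simpa [Real.norm_eq_abs] using hK0 s ⟨hs.1.le, hs.2⟩)
    refine this.trans (le_of_eq ?_)
    rw [sub_zero, zero_sub, neg_neg, div_eq_mul_inv, aux_inv_sqrt t ht0]
    ring
  -- bound B1
  have hB1 : |∫ s in (0:ℝ)..1, (f (s + tp) - f s) / Real.sqrt (t - s)|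
      ≤ 2 * K1 * t ^ (-(1:ℝ)/2) := by
    have := aux_bound_far (fun s => f (s + tp) - f s) K1 t 0 1 (by norm_num) (by linarith) hK1n
      (fun s hs => by
        simpa [Real.norm_eq_abs] using hK1 s ⟨hs.1.le, hs.2⟩)
    refine this.trans ?_
    have hq := aux_sqrt_quarter t ht
    have hpos : (0:ℝ) < Real.sqrt t / 2 := by
      have := Real.sqrt_pos.2 (show (0:ℝ) < t by linarith)
      linarith
    have := div_le_div_of_nonneg_left hK1n hpos hq
    rw [sub_zero, mul_one]
    calc K1 / Real.sqrt (t - 1) ≤ K1 / (Real.sqrt t / 2) := this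
      _ = 2 * K1 * t ^ (-(1:ℝ)/2) := by
          rw [div_div_eq_mul_div, div_eq_mul_inv, aux_inv_sqrt t ht0]; ring
  -- bound B2
  have hB2 : |∫ s in (1:ℝ)..(t/2), (f (s + tp) - f s) / Real.sqrt (t - s)|
      ≤ 2 * M * (t ^ (-(1:ℝ)/2) * I) := by
    have hIn : 0 ≤ I := by
      apply intervalIntegral.integral_nonneg h1t
      intro u hu
      exact Real.rpow_nonneg (by linarith [hu.1]) _
    have := aux_B2 (fun s => f (s + tp) - f s) M (-(1/2 + ν)) t hM.le (by linarith)
      (fun s hs => hdecay s hs.1.le)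
    refine this.trans ?_
    have hq : Real.sqrt t / 2 ≤ Real.sqrt (t/2) := by
      rw [aux_half t (by linarith)]
      exact Real.sqrt_le_sqrt (by linarith)
    have hpos : (0:ℝ) < Real.sqrt t / 2 := by
      have := Real.sqrt_pos.2 (show (0:ℝ) < t by linarith)
      linarith
    calc M * I / Real.sqrt (t/2) ≤ M * I / (Real.sqrt t / 2) :=
          div_le_div_of_nonneg_left (mul_nonneg hM.le hIn) hpos hq
      _ = 2 * M * (t ^ (-(1:ℝ)/2) * I) := by
          rw [div_div_eq_mul_div, div_eq_mul_inv, aux_inv_sqrt t ht0]; ring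
  -- bound B3
  have hB3 : |∫ s in (t/2)..t, (f (s + tp) - f s) / Real.sqrt (t - s)|
      ≤ 2 * M * 2 ^ ν * t ^ (-ν) := by
    have ht2 : (0:ℝ) < t / 2 := by linarith
    have hKb : ∀ s ∈ Set.Ioc (t/2) t, |f (s + tp) - f s| ≤ M * (t/2) ^ (-(1/2 + ν)) := by
      intro s hs
      refine (hdecay s (by linarith [hs.1])).trans ?_
      exact mul_le_mul_of_nonneg_left
        (Real.rpow_le_rpow_of_nonpos ht2 hs.1.le (by linarith)) hM.le
    have := aux_bound_near (fun s => f (s + tp) - f s) (M * (t/2) ^ (-(1/2 + ν))) t (t/2) t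
      (by linarith) le_rfl (mul_nonneg hM.le (Real.rpow_nonneg ht2.le _)) hKb
    refine this.trans (le_of_eq ?_)
    rw [show t - t/2 = t/2 by ring, Real.sqrt_eq_rpow,
      show M * (t/2) ^ (-(1/2 + ν)) * (2 * (t/2) ^ ((1:ℝ)/2))
        = 2 * M * ((t/2) ^ (-(1/2 + ν)) * (t/2) ^ ((1:ℝ)/2)) by ring,
      ← Real.rpow_add ht2, show -(1/2 + ν) + (1:ℝ)/2 = -ν by ring,
      Real.div_rpow ht0 (by norm_num : (0:ℝ) ≤ 2), Real.rpow_neg (by norm_num : (0:ℝ) ≤ 2),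
      div_inv_eq_mul]
    ring
  -- assemble
  have habs : |(∫ s in (-tp)..(0:ℝ), f (s + tp) / Real.sqrt (t - s))
      + ((∫ s in (0:ℝ)..1, (f (s + tp) - f s) / Real.sqrt (t - s))
        + ((∫ s in (1:ℝ)..(t/2), (f (s + tp) - f s) / Real.sqrt (t - s))
        + ∫ s in (t/2)..t, (f (s + tp) - f s) / Real.sqrt (t - s)))|
      ≤ K0 * tp * t ^ (-(1:ℝ)/2) + (2 * K1 * t ^ (-(1:ℝ)/2)
        + (2 * M * (t ^ (-(1:ℝ)/2) * I) + 2 * M * 2 ^ ν * t ^ (-ν))) := by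
    refine (abs_add_le _ _).trans (add_le_add hA ((abs_add_le _ _).trans (add_le_add hB1
      ((abs_add_le _ _).trans (add_le_add hB2 hB3)))))
  refine habs.trans ?_
  have hp1 : (0:ℝ) ≤ t ^ (-(1:ℝ)/2) := Real.rpow_nonneg ht0 _
  have hIn : 0 ≤ I := by
    apply intervalIntegral.integral_nonneg h1t
    intro u hu
    exact Real.rpow_nonneg (by linarith [hu.1]) _
  have hp2 : (0:ℝ) ≤ t ^ (-(1:ℝ)/2) * I := mul_nonneg hp1 hIn
  have hp3 : (0:ℝ) ≤ t ^ (-ν) := Real.rpow_nonneg ht0 _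
  nlinarith [mul_le_mul_of_nonneg_right
      (show K0 * tp + 2 * K1 ≤ K0 * tp + 2 * K1 + 2 * M + 2 * M * 2 ^ ν by nlinarith) hp1,
    mul_le_mul_of_nonneg_right
      (show 2 * M ≤ K0 * tp + 2 * K1 + 2 * M + 2 * M * 2 ^ ν by nlinarith) hp2,
    mul_le_mul_of_nonneg_right
      (show 2 * M * 2 ^ ν ≤ K0 * tp + 2 * K1 + 2 * M + 2 * M * 2 ^ ν by nlinarith) hp3]

lemma aux_I_lt (ν t : ℝ) (hν : 0 < ν) (hν2 : ν < 1/2) (ht : 3 ≤ t) :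
    (∫ s in (1:ℝ)..(t/2), s ^ (-(1/2 + ν))) ≤ t ^ ((1:ℝ)/2 - ν) / (1/2 - ν) := by
  rw [integral_rpow (Or.inl (by linarith : (-1:ℝ) < -(1/2 + ν))), Real.one_rpow,
    show -(1/2 + ν) + 1 = (1:ℝ)/2 - ν by ring]
  have hpos : (0:ℝ) < 1/2 - ν := by linarith
  have h1 : (t/2) ^ ((1:ℝ)/2 - ν) ≤ t ^ ((1:ℝ)/2 - ν) :=
    Real.rpow_le_rpow (by linarith) (by linarith) hpos.le
  exact (div_le_div_iff_of_pos_right hpos).2 (by linarith)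

lemma aux_I_eq (t : ℝ) (ht : 3 ≤ t) :
    (∫ s in (1:ℝ)..(t/2), s ^ (-(1/2 + 1/2) : ℝ)) ≤ Real.log t := by
  have h1t : (1:ℝ) ≤ t/2 := by linarith
  have h0u : (0:ℝ) ∉ Set.uIcc (1:ℝ) (t/2) := by
    rw [Set.uIcc_of_le h1t]
    intro hc
    exact absurd hc.1 (by norm_num)
  rw [show (-(1/2 + 1/2) : ℝ) = -1 by norm_num]
  simp_rw [Real.rpow_neg_one]
  rw [integral_inv h0u, div_one]
  exact Real.log_le_log (by linarith) (by linarith)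

lemma aux_I_gt (ν t : ℝ) (hν : 1/2 < ν) (ht : 3 ≤ t) :
    (∫ s in (1:ℝ)..(t/2), s ^ (-(1/2 + ν))) ≤ 1 / (ν - 1/2) := by
  have h1t : (1:ℝ) ≤ t/2 := by linarith
  have h0u : (0:ℝ) ∉ Set.uIcc (1:ℝ) (t/2) := by
    rw [Set.uIcc_of_le h1t]
    intro hc
    exact absurd hc.1 (by norm_num)
  rw [integral_rpow (Or.inr ⟨by intro hc; apply absurd (show ν = 1/2 by linarith) (by linarith), h0u⟩),
    Real.one_rpow, show -(1/2 + ν) + 1 = (1:ℝ)/2 - ν by ring]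
  have hx : (0:ℝ) ≤ (t/2) ^ ((1:ℝ)/2 - ν) := Real.rpow_nonneg (by linarith) _
  have hpos : (0:ℝ) < ν - 1/2 := by linarith
  rw [show ((t/2) ^ ((1:ℝ)/2 - ν) - 1) = -(1 - (t/2) ^ ((1:ℝ)/2 - ν)) by ring,
    show (1/2 - ν : ℝ) = -(ν - 1/2) by ring, neg_div_neg_eq]
  exact (div_le_div_iff_of_pos_right hpos).2
    (by linarith [Real.rpow_nonneg (show (0:ℝ) ≤ t/2 by linarith) (-(ν - 1/2))])

/-- asymptotic periodicity of the Abel transform of `g'` when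
`g'(t + t_p) − g'(t)` decays like `t^(−(1/2+ν))`. -/
theorem abel_asymptotically_periodic
    (g : ℝ → ℝ) (hg : ContDiff ℝ (⊤ : ℕ∞) g) (hg0 : g 0 = 0)
    (h : ℝ → ℝ)
    (hdef : ∀ t : ℝ, h t = ∫ s in (0:ℝ)..t, deriv g s / Real.sqrt (t - s))
    (tp ν M : ℝ) (htp : 0 < tp) (hν : 0 < ν) (hM : 0 < M)
    (hdecay : ∀ t : ℝ, 1 ≤ t →
      |deriv g (t + tp) - deriv g t| ≤ M * t ^ (-(1/2 + ν))) :
    ((0 < ν ∧ ν < 1/2) →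
        (fun t : ℝ => h (t + tp) - h t) =O[atTop] fun t : ℝ => t ^ (-ν))
    ∧ (ν = 1/2 →
        (fun t : ℝ => h (t + tp) - h t) =O[atTop]
          fun t : ℝ => t ^ (-(1:ℝ)/2) * Real.log t)
    ∧ (1/2 < ν →
        (fun t : ℝ => h (t + tp) - h t) =O[atTop] fun t : ℝ => t ^ (-(1:ℝ)/2)) := by
  have hfc : Continuous (deriv g) := hg.continuous_deriv (by simp)
  obtain ⟨C, hC, hmaster⟩ := aux_master (deriv g) hfc tp ν M htp hν hM hdecay
  have hD : ∀ t : ℝ, 3 ≤ t → |h (t + tp) - h t| ≤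
      C * t ^ (-(1:ℝ)/2) + C * (t ^ (-(1:ℝ)/2) * ∫ s in (1:ℝ)..(t/2), s ^ (-(1/2 + ν)))
        + C * t ^ (-ν) := by
    intro t ht
    rw [hdef (t + tp), hdef t]
    exact hmaster t ht
  refine ⟨?_, ?_, ?_⟩
  · rintro ⟨hν1, hν2⟩
    rw [Asymptotics.isBigO_iff]
    refine ⟨C + C * (1/(1/2 - ν)) + C, ?_⟩
    filter_upwards [eventually_ge_atTop 3] with t ht
    have ht0 : (0:ℝ) < t := by linarith
    have hp1 : (0:ℝ) ≤ t ^ (-(1:ℝ)/2) := Real.rpow_nonneg ht0.le _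
    have e1 : t ^ (-(1:ℝ)/2) ≤ t ^ (-ν) :=
      Real.rpow_le_rpow_of_exponent_le (by linarith) (by linarith)
    have e2 : t ^ (-(1:ℝ)/2) * (∫ s in (1:ℝ)..(t/2), s ^ (-(1/2 + ν)))
        ≤ t ^ (-ν) * (1/(1/2 - ν)) := by
      have h2 := mul_le_mul_of_nonneg_left (aux_I_lt ν t hν1 hν2 ht) hp1
      refine h2.trans (le_of_eq ?_)
      rw [show t ^ (-(1:ℝ)/2) * (t ^ ((1:ℝ)/2 - ν) / (1/2 - ν))
          = t ^ (-(1:ℝ)/2) * t ^ ((1:ℝ)/2 - ν) * (1/(1/2 - ν)) by ring,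
        ← Real.rpow_add ht0, show -(1:ℝ)/2 + ((1:ℝ)/2 - ν) = -ν by ring]
    rw [Real.norm_eq_abs, Real.norm_eq_abs, abs_of_nonneg (Real.rpow_nonneg ht0.le _)]
    have hDt := hD t ht
    have c1 := mul_le_mul_of_nonneg_left e1 hC.le
    have c2 := mul_le_mul_of_nonneg_left e2 hC.le
    linarith
  · intro hνeq
    subst hνeq
    rw [Asymptotics.isBigO_iff]
    refine ⟨3 * C, ?_⟩
    filter_upwards [eventually_ge_atTop 3] with t ht
    have ht0 : (0:ℝ) < t := by linarith
    have hp1 : (0:ℝ) ≤ t ^ (-(1:ℝ)/2) := Real.rpow_nonneg ht0.le _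
    have hlog0 : (0:ℝ) ≤ Real.log t := Real.log_nonneg (by linarith)
    have hlog1 : (1:ℝ) ≤ Real.log t := by
      rw [show (1:ℝ) = Real.log (Real.exp 1) by rw [Real.log_exp]]
      refine Real.log_le_log (Real.exp_pos 1) ?_
      have := Real.exp_one_lt_d9
      linarith
    have hDt := hD t ht
    rw [show (-(1/2) : ℝ) = -(1:ℝ)/2 by norm_num] at hDt
    have e0 : t ^ (-(1:ℝ)/2) ≤ t ^ (-(1:ℝ)/2) * Real.log t := by
      have := mul_le_mul_of_nonneg_left hlog1 hp1
      linarith [this]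
    have e2 : t ^ (-(1:ℝ)/2) * (∫ s in (1:ℝ)..(t/2), s ^ (-(1/2 + 1/2) : ℝ))
        ≤ t ^ (-(1:ℝ)/2) * Real.log t := mul_le_mul_of_nonneg_left (aux_I_eq t ht) hp1
    rw [Real.norm_eq_abs, Real.norm_eq_abs, abs_of_nonneg (mul_nonneg hp1 hlog0)]
    have c0 := mul_le_mul_of_nonneg_left e0 hC.le
    have c2 := mul_le_mul_of_nonneg_left e2 hC.le
    linarith
  · intro hνgt
    rw [Asymptotics.isBigO_iff]
    refine ⟨C + C * (1/(ν - 1/2)) + C, ?_⟩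
    filter_upwards [eventually_ge_atTop 3] with t ht
    have ht0 : (0:ℝ) < t := by linarith
    have hp1 : (0:ℝ) ≤ t ^ (-(1:ℝ)/2) := Real.rpow_nonneg ht0.le _
    have e1 : t ^ (-ν) ≤ t ^ (-(1:ℝ)/2) :=
      Real.rpow_le_rpow_of_exponent_le (by linarith) (by linarith)
    have e2 : t ^ (-(1:ℝ)/2) * (∫ s in (1:ℝ)..(t/2), s ^ (-(1/2 + ν)))
        ≤ t ^ (-(1:ℝ)/2) * (1/(ν - 1/2)) := mul_le_mul_of_nonneg_left (aux_I_gt ν t hνgt ht) hp1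
    rw [Real.norm_eq_abs, Real.norm_eq_abs, abs_of_nonneg hp1]
    have hDt := hD t ht
    have c1 := mul_le_mul_of_nonneg_left e1 hC.le
    have c2 := mul_le_mul_of_nonneg_left e2 hC.le
    linarith
end

section
/- For K > 0, ν > 0 with ν ≠ 1/2, the integral ∫_K^t ds/(s^{1/2+ν}·√(t-s)) is O(t^{−ν}) for 0 < ν < 1/2 and O(t^{−1/2}) for ν > 1/2, as t → ∞. For ν = 1/2 it is O(t^{−1/2} log t). -/
open Real MeasureTheory intervalIntegral Filter Asymptotics

lemma aux_integrable (p t a : ℝ) (ha : 0 < a) (hat : a ≤ t) :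
    IntervalIntegrable (fun s => s ^ (-p) * (t - s) ^ (-(1/2) : ℝ)) volume a t := by
  have h1 : IntervalIntegrable (fun s => (t - s) ^ (-(1/2) : ℝ)) volume a t := by
    have h0 := (intervalIntegral.intervalIntegrable_rpow' (a := t - a) (b := t - t)
      (r := -(1/2)) (by norm_num)).comp_sub_left t
    simpa using h0
  refine h1.continuousOn_mul ?_
  refine ContinuousOn.rpow_const continuousOn_id fun x hx => Or.inl ?_
  rw [Set.uIcc_of_le hat] at hx
  exact ne_of_gt (lt_of_lt_of_le ha hx.1)

lemma aux_congr (p t K : ℝ) (hK : 0 < K) (hKt : K ≤ t) :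
    (∫ s in K..t, 1 / (s ^ p * Real.sqrt (t - s)))
      = ∫ s in K..t, s ^ (-p) * (t - s) ^ (-(1/2) : ℝ) := by
  refine intervalIntegral.integral_congr fun s hs => ?_
  rw [Set.uIcc_of_le hKt] at hs
  have hs0 : 0 < s := lt_of_lt_of_le hK hs.1
  have hts : 0 ≤ t - s := sub_nonneg.2 hs.2
  rw [Real.sqrt_eq_rpow, Real.rpow_neg hs0.le, Real.rpow_neg hts, one_div, mul_inv]

lemma aux_sqrt_int (t : ℝ) (ht0 : 0 < t) :
    (∫ s in (t/2)..t, (t - s) ^ (-(1/2) : ℝ)) = 2 * (t/2) ^ ((1/2) : ℝ) := by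
  have h := intervalIntegral.integral_comp_sub_left (a := t/2) (b := t)
    (fun u => u ^ (-(1/2) : ℝ)) t
  rw [sub_self] at h
  rw [h, show t - t/2 = t/2 by ring, integral_rpow (Or.inl (by norm_num)),
    Real.zero_rpow (by norm_num)]
  norm_num
  ring

lemma aux_split (p t K : ℝ) (hp : 0 < p) (hK : 0 < K) (hKm : K ≤ t/2) (ht0 : 0 < t) :
    (∫ s in K..t, s ^ (-p) * (t - s) ^ (-(1/2) : ℝ))
      ≤ (∫ s in K..(t/2), s ^ (-p)) * (t/2) ^ (-(1/2) : ℝ)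
        + (t/2) ^ (-p) * (2 * (t/2) ^ ((1/2) : ℝ)) := by
  have hm0 : 0 < t/2 := by linarith
  have hmt : t/2 ≤ t := by linarith
  have hKt : K ≤ t := le_trans hKm hmt
  have hI : IntervalIntegrable (fun s => s ^ (-p) * (t - s) ^ (-(1/2):ℝ)) volume K t :=
    aux_integrable p t K hK hKt
  have hI1 : IntervalIntegrable (fun s => s ^ (-p) * (t - s) ^ (-(1/2):ℝ)) volume K (t/2) :=
    hI.mono_set (by
      rw [Set.uIcc_of_le hKm, Set.uIcc_of_le hKt]; exact Set.Icc_subset_Icc le_rfl hmt)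
  have hI2 : IntervalIntegrable (fun s => s ^ (-p) * (t - s) ^ (-(1/2):ℝ)) volume (t/2) t :=
    hI.mono_set (by
      rw [Set.uIcc_of_le hmt, Set.uIcc_of_le hKt]; exact Set.Icc_subset_Icc hKm le_rfl)
  rw [← intervalIntegral.integral_add_adjacent_intervals hI1 hI2]
  have hb1 : (∫ s in K..(t/2), s ^ (-p) * (t - s) ^ (-(1/2):ℝ))
      ≤ (∫ s in K..(t/2), s ^ (-p)) * (t/2) ^ (-(1/2) : ℝ) := by
    rw [← intervalIntegral.integral_mul_const]
    refine intervalIntegral.integral_mono_on hKm hI1 ?_ ?_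
    · exact (intervalIntegral.intervalIntegrable_rpow (r := -p) (Or.inr (by
        rw [Set.uIcc_of_le hKm]; intro h0; exact absurd h0.1 (not_le.2 hK)))).mul_const _
    · intro s hs
      have hs0 : 0 < s := lt_of_lt_of_le hK hs.1
      refine mul_le_mul_of_nonneg_left ?_ (Real.rpow_nonneg hs0.le _)
      exact Real.rpow_le_rpow_of_nonpos hm0 (by linarith [hs.2]) (by norm_num)
  have hb2 : (∫ s in (t/2)..t, s ^ (-p) * (t - s) ^ (-(1/2):ℝ))
      ≤ (t/2) ^ (-p) * (2 * (t/2) ^ ((1/2) : ℝ)) := by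
    have hsq : IntervalIntegrable (fun s => (t - s) ^ (-(1/2) : ℝ)) volume (t/2) t := by
      have h0 := (intervalIntegral.intervalIntegrable_rpow' (a := t - t/2) (b := t - t)
        (r := -(1/2)) (by norm_num)).comp_sub_left t
      simpa using h0
    calc (∫ s in (t/2)..t, s ^ (-p) * (t - s) ^ (-(1/2):ℝ))
        ≤ ∫ s in (t/2)..t, (t/2) ^ (-p) * (t - s) ^ (-(1/2):ℝ) := by
          refine intervalIntegral.integral_mono_on hmt hI2 (hsq.const_mul _) ?_
          intro s hs
          refine mul_le_mul_of_nonneg_right ?_ (Real.rpow_nonneg (by linarith [hs.2]) _)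
          exact Real.rpow_le_rpow_of_nonpos hm0 hs.1 (by linarith)
      _ = (t/2) ^ (-p) * (2 * (t/2) ^ ((1/2) : ℝ)) := by
          rw [intervalIntegral.integral_const_mul, aux_sqrt_int t ht0]
  exact add_le_add hb1 hb2

lemma aux_bound (K ν t : ℝ) (hK : 0 < K) (hν : 0 < ν) (h2K : 2*K ≤ t) (ht2 : (2:ℝ) ≤ t) :
    ‖∫ s in K..t, 1 / (s ^ (1/2 + ν) * Real.sqrt (t - s))‖
      ≤ (∫ s in K..(t/2), s ^ (-(1/2+ν))) * (t/2) ^ (-(1/2):ℝ)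
        + (t/2) ^ (-(1/2+ν)) * (2 * (t/2) ^ ((1/2):ℝ)) := by
  have ht0 : 0 < t := by linarith
  have hKm : K ≤ t/2 := by linarith
  have hKt : K ≤ t := by linarith
  rw [aux_congr (1/2+ν) t K hK hKt, Real.norm_eq_abs, abs_of_nonneg (by
    refine intervalIntegral.integral_nonneg hKt fun s hs => ?_
    exact mul_nonneg (Real.rpow_nonneg (le_of_lt (lt_of_lt_of_le hK hs.1)) _)
      (Real.rpow_nonneg (by linarith [hs.2]) _))]
  exact aux_split (1/2+ν) t K (by linarith) hK hKm ht0

lemma caseA (K ν : ℝ) (hK : 0 < K) (hν : 0 < ν) (hν2 : ν < 1/2) :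
    (fun t : ℝ => ∫ s in K..t, 1 / (s ^ (1/2 + ν) * Real.sqrt (t - s)))
      =O[atTop] fun t : ℝ => t ^ (-ν) := by
  rw [Asymptotics.isBigO_iff]
  refine ⟨2 ^ ν * (1/(1/2-ν) + 2), ?_⟩
  filter_upwards [Filter.eventually_ge_atTop (max (2*K) 2)] with t ht
  have h2K : 2*K ≤ t := le_trans (le_max_left _ _) ht
  have ht2 : (2:ℝ) ≤ t := le_trans (le_max_right _ _) ht
  have ht0 : (0:ℝ) < t := by linarith
  have hm0 : (0:ℝ) < t/2 := by linarith
  refine le_trans (aux_bound K ν t hK hν h2K ht2) ?_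
  rw [integral_rpow (Or.inl (by linarith))]
  have e1 : (t/2) ^ (-(1/2+ν)+1) * (t/2) ^ (-(1/2):ℝ) = (t/2) ^ (-ν) := by
    rw [← Real.rpow_add hm0]; congr 1; ring
  have e2 : (t/2) ^ (-(1/2+ν)) * (t/2) ^ ((1/2):ℝ) = (t/2) ^ (-ν) := by
    rw [← Real.rpow_add hm0]; congr 1; ring
  have hd : (0:ℝ) < -(1/2+ν)+1 := by linarith
  have hKp : 0 ≤ K ^ (-(1/2+ν)+1) := Real.rpow_nonneg hK.le _
  have hm12 : 0 ≤ (t/2) ^ (-(1/2):ℝ) := Real.rpow_nonneg hm0.le _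
  have hnorm : ‖t ^ (-ν)‖ = t ^ (-ν) := by
    rw [Real.norm_eq_abs, abs_of_nonneg (Real.rpow_nonneg ht0.le _)]
  have h2' : ((2:ℝ)⁻¹) ^ (-ν) = 2 ^ ν := by
    rw [Real.inv_rpow (by norm_num), Real.rpow_neg (by norm_num), inv_inv]
  have h2 : (t/2:ℝ) ^ (-ν) = t ^ (-ν) * 2 ^ ν := by
    rw [div_eq_mul_inv, Real.mul_rpow ht0.le (by norm_num), h2']
  calc ((t/2) ^ (-(1/2+ν)+1) - K ^ (-(1/2+ν)+1)) / (-(1/2+ν)+1) * (t/2) ^ (-(1/2):ℝ)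
        + (t/2) ^ (-(1/2+ν)) * (2 * (t/2) ^ ((1/2):ℝ))
      ≤ (t/2) ^ (-(1/2+ν)+1) / (-(1/2+ν)+1) * (t/2) ^ (-(1/2):ℝ)
        + (t/2) ^ (-(1/2+ν)) * (2 * (t/2) ^ ((1/2):ℝ)) := by
        gcongr
        linarith
    _ = (1/(1/2-ν) + 2) * (t/2) ^ (-ν) := by
        rw [div_mul_eq_mul_div, e1,
          show (t/2) ^ (-(1/2+ν)) * (2 * (t/2) ^ ((1/2):ℝ))
            = 2 * ((t/2) ^ (-(1/2+ν)) * (t/2) ^ ((1/2):ℝ)) from by ring, e2,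
          show -(1/2+ν)+1 = 1/2-ν from by ring]
        ring
    _ = 2 ^ ν * (1/(1/2-ν) + 2) * ‖t ^ (-ν)‖ := by rw [hnorm, h2]; ring

lemma caseC (K ν : ℝ) (hK : 0 < K) (hν : 0 < ν) (hν2 : 1/2 < ν) :
    (fun t : ℝ => ∫ s in K..t, 1 / (s ^ (1/2 + ν) * Real.sqrt (t - s)))
      =O[atTop] fun t : ℝ => t ^ (-(1:ℝ)/2) := by
  rw [Asymptotics.isBigO_iff]
  refine ⟨K ^ (-(1/2+ν)+1) / ((1/2+ν)-1) * 2 ^ ((1/2):ℝ) + 2 * 2 ^ ν, ?_⟩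
  filter_upwards [Filter.eventually_ge_atTop (max (2*K) 2)] with t ht
  have h2K : 2*K ≤ t := le_trans (le_max_left _ _) ht
  have ht2 : (2:ℝ) ≤ t := le_trans (le_max_right _ _) ht
  have ht0 : (0:ℝ) < t := by linarith
  have hm0 : (0:ℝ) < t/2 := by linarith
  have hKm : K ≤ t/2 := by linarith
  have hd : (0:ℝ) < (1/2+ν) - 1 := by linarith
  refine le_trans (aux_bound K ν t hK hν h2K ht2) ?_
  have hmp1 : 0 ≤ (t/2) ^ (-(1/2+ν)+1) := Real.rpow_nonneg hm0.le _
  have hm12 : 0 ≤ (t/2) ^ (-(1/2):ℝ) := Real.rpow_nonneg hm0.le _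
  have hint : (∫ s in K..(t/2), s ^ (-(1/2+ν)))
      ≤ K ^ (-(1/2+ν)+1) / ((1/2+ν)-1) := by
    rw [integral_rpow (Or.inr ⟨by intro h; apply hν2.ne; linarith [neg_eq_iff_eq_neg.mp h],
      by rw [Set.uIcc_of_le hKm]; intro h0; exact absurd h0.1 (not_le.2 hK)⟩)]
    have e : ((t/2) ^ (-(1/2+ν)+1) - K ^ (-(1/2+ν)+1)) / (-(1/2+ν)+1)
        = (K ^ (-(1/2+ν)+1) - (t/2) ^ (-(1/2+ν)+1)) / ((1/2+ν)-1) := by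
      have hne : (-(1/2+ν)+1 : ℝ) ≠ 0 := by intro h; linarith [h]
      rw [div_eq_div_iff hne hd.ne']
      ring
    rw [e]
    gcongr
    linarith
  have e2 : (t/2) ^ (-(1/2+ν)) * (t/2) ^ ((1/2):ℝ) = (t/2) ^ (-ν) := by
    rw [← Real.rpow_add hm0]; congr 1; ring
  have h2' : ((2:ℝ)⁻¹) ^ (-ν) = 2 ^ ν := by
    rw [Real.inv_rpow (by norm_num), Real.rpow_neg (by norm_num), inv_inv]
  have hball : (t/2:ℝ) ^ (-ν) = t ^ (-ν) * 2 ^ ν := by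
    rw [div_eq_mul_inv, Real.mul_rpow ht0.le (by norm_num), h2']
  have h12 : (t/2:ℝ) ^ (-(1/2):ℝ) = t ^ (-(1/2):ℝ) * 2 ^ ((1/2):ℝ) := by
    have h3 : ((2:ℝ)⁻¹) ^ (-(1/2):ℝ) = 2 ^ ((1/2):ℝ) := by
      rw [Real.inv_rpow (by norm_num), Real.rpow_neg (by norm_num), inv_inv]
    rw [div_eq_mul_inv, Real.mul_rpow ht0.le (by norm_num), h3]
  have hmono : t ^ (-ν) ≤ t ^ (-(1/2):ℝ) :=
    Real.rpow_le_rpow_of_exponent_le (by linarith) (by linarith)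
  have h2ν : (0:ℝ) ≤ 2 ^ ν := Real.rpow_nonneg (by norm_num) _
  have hnorm : ‖t ^ (-(1:ℝ)/2)‖ = t ^ (-(1/2):ℝ) := by
    rw [show (-(1:ℝ)/2) = (-(1/2):ℝ) from by norm_num, Real.norm_eq_abs,
      abs_of_nonneg (Real.rpow_nonneg ht0.le _)]
  rw [hnorm]
  calc (∫ s in K..(t/2), s ^ (-(1/2+ν))) * (t/2) ^ (-(1/2):ℝ)
        + (t/2) ^ (-(1/2+ν)) * (2 * (t/2) ^ ((1/2):ℝ))
      ≤ K ^ (-(1/2+ν)+1) / ((1/2+ν)-1) * (t/2) ^ (-(1/2):ℝ) + 2 * (t/2) ^ (-ν) := by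
        refine add_le_add (mul_le_mul_of_nonneg_right hint hm12) (le_of_eq ?_)
        rw [← e2]; ring
    _ ≤ K ^ (-(1/2+ν)+1) / ((1/2+ν)-1) * (t ^ (-(1/2):ℝ) * 2 ^ ((1/2):ℝ))
          + 2 * (2 ^ ν * t ^ (-(1/2):ℝ)) := by
        rw [h12, hball]
        refine add_le_add le_rfl ?_
        have h4 : t ^ (-ν) * 2 ^ ν ≤ 2 ^ ν * t ^ (-(1/2):ℝ) := by
          rw [mul_comm]; exact mul_le_mul_of_nonneg_left hmono h2ν
        linarith
    _ = (K ^ (-(1/2+ν)+1) / ((1/2+ν)-1) * 2 ^ ((1/2):ℝ) + 2 * 2 ^ ν) * t ^ (-(1/2):ℝ) := by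
        ring

lemma caseB (K : ℝ) (hK : 0 < K) :
    (fun t : ℝ => ∫ s in K..t, 1 / (s ^ (1/2 + 1/2 : ℝ) * Real.sqrt (t - s)))
      =O[atTop] fun t : ℝ => t ^ (-(1:ℝ)/2) * Real.log t := by
  rw [Asymptotics.isBigO_iff]
  refine ⟨(3 + |Real.log (2*K)|) * 2 ^ ((1/2):ℝ), ?_⟩
  filter_upwards [Filter.eventually_ge_atTop (max (max (2*K) 2) (Real.exp 1))] with t ht
  have h2K : 2*K ≤ t := le_trans (le_trans (le_max_left _ _) (le_max_left _ _)) ht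
  have ht2 : (2:ℝ) ≤ t := le_trans (le_trans (le_max_right _ _) (le_max_left _ _)) ht
  have he : Real.exp 1 ≤ t := le_trans (le_max_right _ _) ht
  have ht0 : (0:ℝ) < t := by linarith
  have hm0 : (0:ℝ) < t/2 := by linarith
  have hKm : K ≤ t/2 := by linarith
  have hlog : 1 ≤ Real.log t := (Real.le_log_iff_exp_le ht0).mpr he
  have hm12 : 0 ≤ (t/2) ^ (-(1/2):ℝ) := Real.rpow_nonneg hm0.le _
  refine le_trans (aux_bound K (1/2) t hK (by norm_num) h2K ht2) ?_
  have hlogint : (∫ s in K..(t/2), s ^ (-(1/2+1/2):ℝ)) = Real.log t - Real.log (2*K) := by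
    rw [show (-(1/2+1/2):ℝ) = (-1:ℝ) from by norm_num]
    simp_rw [Real.rpow_neg_one, ← one_div]
    rw [integral_one_div (by rw [Set.uIcc_of_le hKm]; intro h0; exact absurd h0.1 (not_le.2 hK)),
      show (t/2)/K = t/(2*K) from by ring,
      Real.log_div ht0.ne' (by positivity)]
  have e2 : (t/2) ^ (-(1/2+1/2):ℝ) * (t/2) ^ ((1/2):ℝ) = (t/2) ^ (-(1/2):ℝ) := by
    rw [← Real.rpow_add hm0]; congr 1; ring
  have h12 : (t/2:ℝ) ^ (-(1/2):ℝ) = t ^ (-(1/2):ℝ) * 2 ^ ((1/2):ℝ) := by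
    have h3 : ((2:ℝ)⁻¹) ^ (-(1/2):ℝ) = 2 ^ ((1/2):ℝ) := by
      rw [Real.inv_rpow (by norm_num), Real.rpow_neg (by norm_num), inv_inv]
    rw [div_eq_mul_inv, Real.mul_rpow ht0.le (by norm_num), h3]
  have hnorm : ‖t ^ (-(1:ℝ)/2) * Real.log t‖ = t ^ (-(1/2):ℝ) * Real.log t := by
    rw [show (-(1:ℝ)/2) = (-(1/2):ℝ) from by norm_num, Real.norm_eq_abs,
      abs_of_nonneg (mul_nonneg (Real.rpow_nonneg ht0.le _) (by linarith))]
  rw [hnorm]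
  have hle1 : Real.log t - Real.log (2*K) ≤ (1 + |Real.log (2*K)|) * Real.log t := by
    have h5 : -Real.log (2*K) ≤ |Real.log (2*K)| := neg_le_abs _
    have h6 : |Real.log (2*K)| ≤ |Real.log (2*K)| * Real.log t :=
      le_mul_of_one_le_right (abs_nonneg _) hlog
    nlinarith
  calc (∫ s in K..(t/2), s ^ (-(1/2+1/2):ℝ)) * (t/2) ^ (-(1/2):ℝ)
        + (t/2) ^ (-(1/2+1/2):ℝ) * (2 * (t/2) ^ ((1/2):ℝ))
      ≤ ((1 + |Real.log (2*K)|) * Real.log t) * (t/2) ^ (-(1/2):ℝ)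
        + 2 * (t/2) ^ (-(1/2):ℝ) := by
        refine add_le_add (mul_le_mul_of_nonneg_right (by rw [hlogint]; exact hle1) hm12)
          (le_of_eq ?_)
        rw [← e2]; ring
    _ ≤ ((1 + |Real.log (2*K)|) * Real.log t) * (t/2) ^ (-(1/2):ℝ)
        + (2 * Real.log t) * (t/2) ^ (-(1/2):ℝ) :=
        add_le_add le_rfl (mul_le_mul_of_nonneg_right (by linarith) hm12)
    _ = (3 + |Real.log (2*K)|) * 2 ^ ((1/2):ℝ) * (t ^ (-(1/2):ℝ) * Real.log t) := by
        rw [h12]; ring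

/-- asymptotics of `∫_K^t ds/(s^(1/2+ν)√(t-s))` as `t → ∞`. -/
theorem integral_power_sqrt_asymptotics (K ν : ℝ) (hK : 0 < K) (hν : 0 < ν) :
    ((ν < 1/2) →
        (fun t : ℝ => ∫ s in K..t, 1 / (s ^ (1/2 + ν) * Real.sqrt (t - s)))
          =O[atTop] fun t : ℝ => t ^ (-ν))
    ∧ (ν = 1/2 →
        (fun t : ℝ => ∫ s in K..t, 1 / (s ^ (1/2 + ν) * Real.sqrt (t - s)))
          =O[atTop] fun t : ℝ => t ^ (-(1:ℝ)/2) * Real.log t)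
    ∧ (1/2 < ν →
        (fun t : ℝ => ∫ s in K..t, 1 / (s ^ (1/2 + ν) * Real.sqrt (t - s)))
          =O[atTop] fun t : ℝ => t ^ (-(1:ℝ)/2)) := by
  refine ⟨fun h => caseA K ν hK hν h, fun h => ?_, fun h => caseC K ν hK hν h⟩
  subst h
  exact caseB K hK
end

section
/- For a continuous function f on [0,∞), the composition of the Abel transform with itself satisfies (A(Af))(t) = π·∫_0^t f(s) ds for all t ≥ 0, where Af(t) = ∫_0^t f(s)/√(t-s) ds. -/
/-!
Since `√x = 0` for `x ≤ 0`, the iterated Abel transform is the integral over the square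
`(0, t]²` of `f u / (√(s - u) √(t - s))`, the kernel vanishing off the triangle `u < s < t`.
Exchanging the order of integration (Fubini), the inner integral becomes
`∫_u^t ds / √((s - u)(t - s)) = π`: the map `s ↦ arcsin ((2s - u - t) / (t - u))`
is an antiderivative of the integrand, running from `-π/2` to `π/2`.
-/

open Real MeasureTheory intervalIntegral Set

theorem hasDerivAt_arcsin_affine {a b x : ℝ} (hx : x ∈ Ioo a b) :
    HasDerivAt (fun y => arcsin ((2 * y - a - b) / (b - a))) (√(x - a) * √(b - x))⁻¹ x := by
  obtain ⟨hax, hxb⟩ := hx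
  have hab : 0 < b - a := by linarith
  have hy : 1 - ((2 * x - a - b) / (b - a)) ^ 2 = (2 / (b - a)) ^ 2 * ((x - a) * (b - x)) := by
    field_simp; ring
  have hlin : HasDerivAt (fun y => (2 * y - a - b) / (b - a)) (2 / (b - a)) x := by
    simpa using (((hasDerivAt_id x).const_mul 2).sub_const a |>.sub_const b).div_const (b - a)
  refine ((hasDerivAt_arcsin ?_ ?_).comp x hlin).congr_deriv ?_
  · rw [ne_eq, div_eq_iff hab.ne']; linarith
  · rw [ne_eq, div_eq_iff hab.ne']; linarith
  · rw [hy, sqrt_mul (by positivity), sqrt_mul (by linarith), sqrt_sq (by positivity)]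
    have : 0 < √(x - a) := sqrt_pos.2 (by linarith)
    have : 0 < √(b - x) := sqrt_pos.2 (by linarith)
    field_simp

theorem inv_sqrt_mul_sqrt_eq_zero_of_notMem {a b x : ℝ} (hx : x ∉ Ioo a b) :
    (√(x - a) * √(b - x))⁻¹ = 0 := by
  rw [mem_Ioo, not_and_or, not_lt, not_lt] at hx
  rcases hx with hx | hx
  · rw [sqrt_eq_zero_of_nonpos (by linarith), zero_mul, inv_zero]
  · rw [sqrt_eq_zero_of_nonpos (x := b - x) (by linarith), mul_zero, inv_zero]

theorem inv_sqrt_mul_sqrt_eq_zero_of_le {a b : ℝ} (hba : b ≤ a) :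
    (fun x => (√(x - a) * √(b - x))⁻¹) = 0 :=
  funext fun _ => inv_sqrt_mul_sqrt_eq_zero_of_notMem (by simp [Ioo_eq_empty_of_le hba])

theorem intervalIntegrable_inv_sqrt_mul_sqrt {a b : ℝ} (hab : a < b) :
    IntervalIntegrable (fun x => (√(x - a) * √(b - x))⁻¹) volume a b :=
  intervalIntegrable_deriv_of_nonneg (g := fun y => arcsin ((2 * y - a - b) / (b - a)))
    (by fun_prop) (by simpa [hab.le] using fun x hx => hasDerivAt_arcsin_affine hx)
    fun _ _ => by positivity

theorem intervalIntegral_inv_sqrt_mul_sqrt {a b : ℝ} (hab : a < b) :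
    ∫ x in a..b, (√(x - a) * √(b - x))⁻¹ = π := by
  rw [integral_eq_sub_of_hasDerivAt_of_le hab.le (by fun_prop)
    (fun x hx => hasDerivAt_arcsin_affine hx) (intervalIntegrable_inv_sqrt_mul_sqrt hab)]
  have hb : (2 * b - a - b) / (b - a) = 1 := by rw [div_eq_one_iff_eq (by linarith)]; ring
  have ha : (2 * a - a - b) / (b - a) = -1 := by rw [div_eq_iff (by linarith)]; ring
  simp only [hb, ha, arcsin_one, arcsin_neg_one]
  ring

theorem integrable_inv_sqrt_mul_sqrt (a b : ℝ) :
    Integrable fun x => (√(x - a) * √(b - x))⁻¹ := by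
  rcases lt_or_ge a b with hab | hba
  · refine (intervalIntegrable_inv_sqrt_mul_sqrt hab).1.integrable_of_forall_notMem_eq_zero
      fun x hx => inv_sqrt_mul_sqrt_eq_zero_of_notMem fun h => hx (Ioo_subset_Ioc_self h)
  · rw [inv_sqrt_mul_sqrt_eq_zero_of_le hba]
    exact integrable_zero _ _ _

theorem integral_inv_sqrt_mul_sqrt {a b : ℝ} (hab : a < b) :
    ∫ x, (√(x - a) * √(b - x))⁻¹ = π := by
  rw [← setIntegral_eq_integral_of_forall_compl_eq_zero (s := Ioc a b)
      fun x hx => inv_sqrt_mul_sqrt_eq_zero_of_notMem fun h => hx (Ioo_subset_Ioc_self h),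
    ← integral_of_le hab.le, intervalIntegral_inv_sqrt_mul_sqrt hab]

theorem integral_inv_sqrt_mul_sqrt_le (a b : ℝ) :
    ∫ x, (√(x - a) * √(b - x))⁻¹ ≤ π := by
  rcases lt_or_ge a b with hab | hba
  · exact (integral_inv_sqrt_mul_sqrt hab).le
  · rw [inv_sqrt_mul_sqrt_eq_zero_of_le hba, Pi.zero_def, integral_zero]
    exact pi_pos.le

section Abel

variable {E : Type*} [NormedAddCommGroup E] [NormedSpace ℝ E]

noncomputable def abelTransform (f : ℝ → E) (t : ℝ) : E :=
  ∫ u in 0..t, (√(t - u))⁻¹ • f u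

theorem abelTransform_abelTransform_eq_setIntegral_setIntegral (f : ℝ → E) {t : ℝ}
    (ht : 0 ≤ t) :
    abelTransform (abelTransform f) t =
      ∫ s in Ioc 0 t, ∫ u in Ioc 0 t, (√(s - u) * √(t - s))⁻¹ • f u := by
  rw [abelTransform, integral_of_le ht]
  refine setIntegral_congr_fun measurableSet_Ioc fun s hs => ?_
  rw [abelTransform, ← intervalIntegral.integral_smul (√(t - s))⁻¹, integral_of_le hs.1.le]
  simp only [mul_inv_rev, mul_smul]
  refine (setIntegral_eq_of_subset_of_forall_sdiff_eq_zero measurableSet_Ioc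
    (Ioc_subset_Ioc_right hs.2) fun u hu => ?_).symm
  have hsu : s < u := lt_of_not_ge fun h => hu.2 ⟨hu.1.1, h⟩
  rw [sqrt_eq_zero_of_nonpos (x := s - u) (by linarith), inv_zero, zero_smul, smul_zero]

theorem integrable_inv_sqrt_mul_sqrt_smul {f : ℝ → E} {S : Set ℝ} (hf : IntegrableOn f S)
    (t : ℝ) :
    Integrable (fun p : ℝ × ℝ => (√(p.1 - p.2) * √(t - p.1))⁻¹ • f p.2)
      ((volume.restrict S).prod (volume.restrict S)) := by
  have hmeas : AEStronglyMeasurable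
      (fun p : ℝ × ℝ => (√(p.1 - p.2) * √(t - p.1))⁻¹ • f p.2)
      ((volume.restrict S).prod (volume.restrict S)) :=
    (Measurable.aestronglyMeasurable (by fun_prop)).smul hf.aestronglyMeasurable.comp_snd
  refine (integrable_prod_iff' hmeas).2 ⟨.of_forall fun u =>
    (integrable_inv_sqrt_mul_sqrt u t).integrableOn.smul_const (f u), ?_⟩
  refine (hf.norm.const_mul π).mono' hmeas.prod_swap.norm.integral_prod_right'
    (.of_forall fun u => ?_)
  have hnorm (s : ℝ) :
      ‖(√(s - u) * √(t - s))⁻¹ • f u‖ = (√(s - u) * √(t - s))⁻¹ * ‖f u‖ := by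
    rw [norm_smul, Real.norm_of_nonneg (by positivity)]
  simp only [hnorm, MeasureTheory.integral_mul_const]
  rw [norm_mul, norm_norm, Real.norm_of_nonneg (integral_nonneg fun s => by positivity)]
  gcongr
  exact (setIntegral_le_integral (integrable_inv_sqrt_mul_sqrt u t)
    (.of_forall fun s => by positivity)).trans (integral_inv_sqrt_mul_sqrt_le u t)

theorem setIntegral_inv_sqrt_mul_sqrt_smul [CompleteSpace E] (x : E) {u t : ℝ}
    (hu : u ∈ Ioo 0 t) :
    ∫ s in Ioc 0 t, (√(s - u) * √(t - s))⁻¹ • x = π • x := by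
  have hsupp (s : ℝ) (hs : s ∉ Ioc 0 t) : (√(s - u) * √(t - s))⁻¹ = 0 :=
    inv_sqrt_mul_sqrt_eq_zero_of_notMem fun h => hs ⟨hu.1.trans h.1, h.2.le⟩
  rw [_root_.integral_smul_const, setIntegral_eq_integral_of_forall_compl_eq_zero hsupp,
    integral_inv_sqrt_mul_sqrt hu.2]

theorem abelTransform_abelTransform [CompleteSpace E] {f : ℝ → E} {t : ℝ} (ht : 0 ≤ t)
    (hf : IntegrableOn f (Ioc 0 t)) :
    abelTransform (abelTransform f) t = π • ∫ s in 0..t, f s := by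
  rw [abelTransform_abelTransform_eq_setIntegral_setIntegral f ht,
    integral_integral_swap (integrable_inv_sqrt_mul_sqrt_smul hf t), integral_of_le ht,
    ← MeasureTheory.integral_smul, integral_Ioc_eq_integral_Ioo, integral_Ioc_eq_integral_Ioo]
  exact setIntegral_congr_fun measurableSet_Ioo fun u hu =>
    setIntegral_inv_sqrt_mul_sqrt_smul _ hu

end Abel

/-- the Abel transform squared is `π` times the integration operator:
for continuous `f` on `[0,∞)`, `(A(Af))(t) = π ∫_0^t f(s) ds`. -/
theorem abel_squared (f : ℝ → ℂ) (hf : ContinuousOn f (Set.Ici 0)) (t : ℝ) (ht : 0 ≤ t) :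
    (∫ s in (0:ℝ)..t,
        (∫ u in (0:ℝ)..s, f u / (Real.sqrt (s - u) : ℂ)) / (Real.sqrt (t - s) : ℂ))
      = (π : ℂ) * ∫ s in (0:ℝ)..t, f s := by
  have hf' : IntegrableOn f (Ioc 0 t) :=
    ((hf.mono Icc_subset_Ici_self).integrableOn_Icc).mono_set Ioc_subset_Icc_self
  have hdiv (z : ℂ) (x : ℝ) : z / (√x : ℂ) = (√x)⁻¹ • z := by
    rw [Complex.real_smul, Complex.ofReal_inv, div_eq_inv_mul]
  simp only [hdiv, ← Complex.real_smul]
  exact abelTransform_abelTransform ht hf'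
end
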